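/- arXiv:1102.5051 — 3 statements merged into one kernel-verified Lean document; each statement's English description precedes it below -/
import Mathlib

section
/- Let α : ℝ^{d-1} → ℝ be continuously differentiable with bounded gradient, and define F : ℝ^d → ℂ by F(x', x_d) := e^{-i α(x') x_d} - 1 + i α(x') x_d. Then for all x = (x', x_d) with x_d ≥ 0, the Euclidean norm of the gradient of F satisfies |∇F(x)| ≤ |α(x')| x_d · sqrt(‖α‖_∞² + ‖∇'α‖_∞² x_d²), where ‖α‖_∞ and ‖∇'α‖_∞ denote the supremum norms of α and of its gradient. -/
/-!
Write `F = φ ∘ u` with `φ(t) = e^{-it} - 1 + it` and `u(x', x_d) = α(x') x_d`. Since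
`φ'(t) = i (1 - e^{-it})`, the chain rule gives `|∇F(x)| = |φ'(u x)| |∇u(x)|`, and
`|φ'(t)| ≤ |t|`. The gradient `∇u = (x_d ∇'α, α)` lives on the Euclidean product, so by
Cauchy–Schwarz its norm is at most `√(‖α‖_∞² + ‖∇'α‖_∞² x_d²)`.
-/

open Complex

lemma mul_add_mul_le_sqrt_mul_sqrt (a b c d : ℝ) :
    a * b + c * d ≤ √(a ^ 2 + c ^ 2) * √(b ^ 2 + d ^ 2) := by
  rw [← Real.sqrt_mul (by positivity)]
  exact Real.le_sqrt_of_sq_le (by nlinarith [sq_nonneg (a * d - c * b)])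

lemma WithLp.opNorm_comp_fstL_add_comp_sndL_le {𝕜 E F G : Type*} [NontriviallyNormedField 𝕜]
    [SeminormedAddCommGroup E] [NormedSpace 𝕜 E] [SeminormedAddCommGroup F] [NormedSpace 𝕜 F]
    [SeminormedAddCommGroup G] [NormedSpace 𝕜 G] (f : E →L[𝕜] G) (g : F →L[𝕜] G) :
    ‖f.comp (WithLp.fstL 2 𝕜 E F) + g.comp (WithLp.sndL 2 𝕜 E F)‖ ≤ √(‖f‖ ^ 2 + ‖g‖ ^ 2) := by
  refine ContinuousLinearMap.opNorm_le_bound _ (by positivity) fun v => ?_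
  calc ‖f v.fst + g v.snd‖ ≤ ‖f‖ * ‖v.fst‖ + ‖g‖ * ‖v.snd‖ :=
        (norm_add_le _ _).trans (add_le_add (f.le_opNorm _) (g.le_opNorm _))
    _ ≤ √(‖f‖ ^ 2 + ‖g‖ ^ 2) * √(‖v.fst‖ ^ 2 + ‖v.snd‖ ^ 2) := mul_add_mul_le_sqrt_mul_sqrt ..
    _ = √(‖f‖ ^ 2 + ‖g‖ ^ 2) * ‖v‖ := by rw [WithLp.prod_norm_eq_of_L2]

lemma HasFDerivAt.comp_fst_mul_snd {p : ENNReal} [Fact (1 ≤ p)] {E : Type*}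
    [NormedAddCommGroup E] [NormedSpace ℝ E] {f : E → ℝ} {f' : E →L[ℝ] ℝ} {x : WithLp p (E × ℝ)}
    (hf : HasFDerivAt f f' x.fst) :
    HasFDerivAt (fun y : WithLp p (E × ℝ) => f y.fst * y.snd)
      ((x.snd • f').comp (WithLp.fstL p ℝ E ℝ) +
        (f x.fst • ContinuousLinearMap.id ℝ ℝ).comp (WithLp.sndL p ℝ E ℝ)) x := by
  refine ((hf.comp x (WithLp.fstL p ℝ E ℝ).hasFDerivAt).mul
    (WithLp.sndL p ℝ E ℝ).hasFDerivAt).congr_fderiv ?_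
  ext v
  simp only [Function.comp_apply, WithLp.sndL_apply, add_apply, smul_apply, smul_eq_mul,
    ContinuousLinearMap.comp_apply, WithLp.fstL_apply, ContinuousLinearMap.smul_comp,
    ContinuousLinearMap.id_comp]
  ring

lemma hasDerivAt_cexp_neg_I_mul_sub_one_add_I_mul (z : ℂ) :
    HasDerivAt (fun w => exp (-I * w) - 1 + I * w) (I * (1 - exp (-I * z))) z := by
  refine (((((hasDerivAt_id' z).const_mul (-I)).cexp).sub_const 1).add
    ((hasDerivAt_id' z).const_mul I)).congr_deriv ?_
  ring

lemma norm_I_mul_one_sub_cexp_neg_I_mul_ofReal_le (t : ℝ) :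
    ‖I * (1 - exp (-I * t))‖ ≤ |t| := by
  have h : 1 - exp (-I * t) = -(exp (I * (-t : ℝ)) - 1) := by push_cast; ring_nf
  rw [h, norm_mul, norm_I, one_mul, norm_neg]
  simpa using Real.norm_exp_I_mul_ofReal_sub_one_le (x := -t)

lemma norm_fderiv_cexp_neg_I_mul_sub_one_add_I_mul_le {E : Type*} [NormedAddCommGroup E]
    [NormedSpace ℝ E] {u : E → ℝ} {u' : E →L[ℝ] ℝ} {x : E} (hu : HasFDerivAt u u' x) :
    ‖fderiv ℝ (fun y => exp (-I * u y) - 1 + I * u y) x‖ ≤ |u x| * ‖u'‖ := by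
  have hF : HasFDerivAt (fun y => exp (-I * u y) - 1 + I * u y)
      ((I * (1 - exp (-I * u x))) • ofRealCLM.comp u') x :=
    (hasDerivAt_cexp_neg_I_mul_sub_one_add_I_mul _).comp_hasFDerivAt x
      (ofRealCLM.hasFDerivAt.comp x hu)
  rw [hF.fderiv, norm_smul]
  refine mul_le_mul (norm_I_mul_one_sub_cexp_neg_I_mul_ofReal_le _) ?_ (norm_nonneg _)
    (abs_nonneg _)
  calc ‖ofRealCLM.comp u'‖ ≤ ‖ofRealCLM‖ * ‖u'‖ := ofRealCLM.opNorm_comp_le u'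
    _ = ‖u'‖ := by rw [ofRealCLM_norm, one_mul]

/-- Estimate (2.12): for `F(x', x_d) = e^{-i α(x') x_d} - 1 + i α(x') x_d` on the
Euclidean product `ℝ^{d-1} ×₂ ℝ`, and `x_d ≥ 0`,
`|∇F(x)| ≤ |α(x')| x_d √(‖α‖_∞² + ‖∇'α‖_∞² x_d²)`. -/
theorem stmt_2 (n : ℕ) (α : EuclideanSpace ℝ (Fin n) → ℝ)
    (hα : ContDiff ℝ 1 α) (Mα Mg : ℝ)
    (hMα : ∀ y, |α y| ≤ Mα) (hMg : ∀ y, ‖fderiv ℝ α y‖ ≤ Mg)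
    (F : WithLp 2 (EuclideanSpace ℝ (Fin n) × ℝ) → ℂ)
    (hF : ∀ x : WithLp 2 (EuclideanSpace ℝ (Fin n) × ℝ),
      F x = Complex.exp (-Complex.I * α x.ofLp.1 * x.ofLp.2) - 1 + Complex.I * α x.ofLp.1 * x.ofLp.2)
    (x : WithLp 2 (EuclideanSpace ℝ (Fin n) × ℝ)) (hx : 0 ≤ x.ofLp.2) :
    ‖fderiv ℝ F x‖ ≤ |α x.ofLp.1| * x.ofLp.2 * Real.sqrt (Mα ^ 2 + Mg ^ 2 * x.ofLp.2 ^ 2) := by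
  change 0 ≤ x.snd at hx
  have hu := HasFDerivAt.comp_fst_mul_snd (x := x)
    (hα.differentiable one_ne_zero x.fst).hasFDerivAt
  have hFu : F = fun y => exp (-I * ↑(α y.fst * y.snd)) - 1 + I * ↑(α y.fst * y.snd) := by
    funext y
    simp only [hF, ofReal_mul, mul_assoc]
    rfl
  have h₁ : ‖x.snd • fderiv ℝ α x.fst‖ ≤ Mg * x.snd := by
    rw [norm_smul, Real.norm_of_nonneg hx, mul_comm]
    exact mul_le_mul_of_nonneg_right (hMg _) hx
  have h₂ : ‖α x.fst • ContinuousLinearMap.id ℝ ℝ‖ ≤ Mα := by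
    rw [norm_smul, ContinuousLinearMap.norm_id, mul_one, Real.norm_eq_abs]
    exact hMα _
  have hu'_le := (WithLp.opNorm_comp_fstL_add_comp_sndL_le (x.snd • fderiv ℝ α x.fst)
      (α x.fst • ContinuousLinearMap.id ℝ ℝ)).trans <|
    Real.sqrt_le_sqrt (y := Mα ^ 2 + Mg ^ 2 * x.snd ^ 2) <| by
      nlinarith [norm_nonneg (x.snd • fderiv ℝ α x.fst),
        norm_nonneg (α x.fst • ContinuousLinearMap.id ℝ ℝ)]
  rw [hFu]
  refine (norm_fderiv_cexp_neg_I_mul_sub_one_add_I_mul_le hu).trans ?_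
  rw [abs_mul, abs_of_nonneg hx]
  exact mul_le_mul_of_nonneg_left hu'_le (by positivity)
end

section
/- Let ε > 0, Ω_ε = ℝ^{d-1} × (0,ε), and let α : ℝ^{d-1} → ℝ be bounded measurable. Define the sesquilinear form h_ε(u,v) := ∫_{Ω_ε} ∇u·∇v̄ dx + i∫_{ℝ^{d-1}} α(x')(u v̄)(x',ε) dx' − i∫_{ℝ^{d-1}} α(x')(u v̄)(x',0) dx' on W^{1,2}(Ω_ε), with boundary values in the trace sense. Then for every u ∈ W^{1,2}(Ω_ε), the quadratic form satisfies Re h_ε[u] = ‖∇u‖²_{L²(Ω_ε)} ≥ 0 and |Im h_ε[u]| ≤ 2‖α‖_∞ ‖u‖_{L²(Ω_ε)} ‖∇u‖_{L²(Ω_ε)}. -/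
/-!
The real part of the form is the Dirichlet integral. For the imaginary part, the fundamental
theorem of calculus on each vertical fibre gives
`|u(x', ε)|² - |u(x', 0)|² = ∫₀^ε 2 Re (u ∂ₜū)(x', t) dt`, so the boundary terms differ by at most
`2 ∫ |u| |∂ₜu|`; integrating against `α` and applying Cauchy–Schwarz on the slab, together with
`‖∂ₜu‖ ≤ ‖∇u‖`, gives the bound.
-/

open MeasureTheory Set Complex

/-- The quadratic form `h_ε[u] = ∫_{Ω_ε} |∇u|² + i∫ α |u(·,ε)|² - i∫ α |u(·,0)|²`,
where `g'` is the gradient of `u` in the first `d-1` variables and `ud = ∂_d u`. -/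
noncomputable def robinForm (n : ℕ) (ε : ℝ) (α : EuclideanSpace ℝ (Fin n) → ℝ)
    (u : EuclideanSpace ℝ (Fin n) × ℝ → ℂ)
    (g' : EuclideanSpace ℝ (Fin n) × ℝ → EuclideanSpace ℂ (Fin n))
    (ud : EuclideanSpace ℝ (Fin n) × ℝ → ℂ) : ℂ :=
  ((∫ x, (‖g' x‖ ^ 2 + ‖ud x‖ ^ 2)
      ∂((volume : Measure (EuclideanSpace ℝ (Fin n) × ℝ)).restrict (univ ×ˢ Ioo 0 ε)) : ℝ) : ℂ)
  + Complex.I * ((∫ x', α x' * ‖u (x', ε)‖ ^ 2 : ℝ) : ℂ)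
  - Complex.I * ((∫ x', α x' * ‖u (x', 0)‖ ^ 2 : ℝ) : ℂ)

section

variable {E : Type*} [NormedAddCommGroup E] [InnerProductSpace ℝ E]

theorem abs_norm_sq_sub_norm_sq_le {z w : ℝ → E} {a b : ℝ} (hab : a ≤ b)
    (hz : ∀ t, HasDerivAt z (w t) t)
    (hint : IntegrableOn (fun t => ‖z t‖ * ‖w t‖) (Ioo a b)) :
    |‖z b‖ ^ 2 - ‖z a‖ ^ 2| ≤ 2 * ∫ t in Ioo a b, ‖z t‖ * ‖w t‖ := by
  set f : ℝ → ℝ := fun t => ‖z t‖ ^ 2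
  have hf : ∀ t, HasDerivAt f (2 * inner ℝ (z t) (w t)) t := fun t => (hz t).norm_sq
  have hf'_le : ∀ t, ‖deriv f t‖ ≤ 2 * (‖z t‖ * ‖w t‖) := fun t => by
    rw [(hf t).deriv, norm_mul, Real.norm_two]
    gcongr
    exact norm_inner_le_norm _ _
  have hmaj : IntervalIntegrable (fun t => 2 * (‖z t‖ * ‖w t‖)) volume a b := by
    rw [intervalIntegrable_iff_integrableOn_Ioo_of_le hab]
    exact hint.const_mul 2
  have hf'_int : IntervalIntegrable (deriv f) volume a b := by
    rw [intervalIntegrable_iff_integrableOn_Ioo_of_le hab] at hmaj ⊢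
    exact hmaj.mono' (measurable_deriv f).aestronglyMeasurable (ae_of_all _ hf'_le)
  calc |f b - f a| = ‖∫ t in a..b, deriv f t‖ := by
        rw [intervalIntegral.integral_deriv_eq_sub (fun t _ => (hf t).differentiableAt)
          hf'_int, Real.norm_eq_abs]
    _ ≤ ∫ t in a..b, 2 * (‖z t‖ * ‖w t‖) :=
        intervalIntegral.norm_integral_le_of_norm_le hab (ae_of_all _ fun t _ => hf'_le t) hmaj
    _ = 2 * ∫ t in Ioo a b, ‖z t‖ * ‖w t‖ := by
        rw [intervalIntegral.integral_of_le hab, integral_Ioc_eq_integral_Ioo,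
          integral_const_mul]

variable {X : Type*} [MeasurableSpace X] {μ : Measure X}

theorem integral_norm_mul_norm_le_sqrt_mul_sqrt {F G : Type*} [NormedAddCommGroup F]
    [NormedAddCommGroup G] {f : X → F} {g : X → G} (hf : MemLp f 2 μ) (hg : MemLp g 2 μ) :
    ∫ x, ‖f x‖ * ‖g x‖ ∂μ ≤ √(∫ x, ‖f x‖ ^ 2 ∂μ) * √(∫ x, ‖g x‖ ^ 2 ∂μ) := by
  have h := integral_mul_le_Lp_mul_Lq_of_nonneg Real.HolderConjugate.two_two
    (ae_of_all _ fun x => norm_nonneg (f x)) (ae_of_all _ fun x => norm_nonneg (g x))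
    (by simpa using hf.norm) (by simpa using hg.norm)
  simpa only [Real.rpow_two, ← Real.sqrt_eq_rpow] using h

theorem integrable_mul_norm_sq {F : Type*} [NormedAddCommGroup F] {α : X → ℝ} {M : ℝ}
    (hα : AEStronglyMeasurable α μ) (hαM : ∀ x, |α x| ≤ M) {f : X → F} (hf : MemLp f 2 μ) :
    Integrable (fun x => α x * ‖f x‖ ^ 2) μ :=
  (hf.integrable_norm_pow two_ne_zero).bdd_mul hα (ae_of_all _ hαM)

theorem abs_integral_mul_trace_sub_le [SFinite μ] {α : X → ℝ} {M : ℝ} (hαM : ∀ x, |α x| ≤ M)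
    {u ud : X × ℝ → E} {a b : ℝ} (hab : a ≤ b)
    (hu : ∀ x t, HasDerivAt (fun s => u (x, s)) (ud (x, t)) t)
    (hint : Integrable (fun p => ‖u p‖ * ‖ud p‖) (μ.prod (volume.restrict (Ioo a b)))) :
    |∫ x, α x * (‖u (x, b)‖ ^ 2 - ‖u (x, a)‖ ^ 2) ∂μ|
      ≤ 2 * M * ∫ p, ‖u p‖ * ‖ud p‖ ∂(μ.prod (volume.restrict (Ioo a b))) := by
  set g : X → ℝ := fun x => ∫ t in Ioo a b, ‖u (x, t)‖ * ‖ud (x, t)‖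
  have hslice : ∀ᵐ x ∂μ, |‖u (x, b)‖ ^ 2 - ‖u (x, a)‖ ^ 2| ≤ 2 * g x := by
    filter_upwards [hint.prod_right_ae] with x hx
    exact abs_norm_sq_sub_norm_sq_le hab (hu x) hx
  calc |∫ x, α x * (‖u (x, b)‖ ^ 2 - ‖u (x, a)‖ ^ 2) ∂μ|
      ≤ ∫ x, M * (2 * g x) ∂μ := by
        rw [← Real.norm_eq_abs]
        refine norm_integral_le_of_norm_le ((hint.integral_prod_left.const_mul 2).const_mul M) ?_
        filter_upwards [hslice] with x hx
        rw [Real.norm_eq_abs, abs_mul]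
        exact mul_le_mul (hαM x) hx (abs_nonneg _) ((abs_nonneg _).trans (hαM x))
    _ = 2 * M * ∫ p, ‖u p‖ * ‖ud p‖ ∂(μ.prod (volume.restrict (Ioo a b))) := by
        rw [integral_const_mul, integral_const_mul, integral_integral hint]
        ring

end

theorem robinForm_re (n : ℕ) (ε : ℝ) (α : EuclideanSpace ℝ (Fin n) → ℝ)
    (u : EuclideanSpace ℝ (Fin n) × ℝ → ℂ)
    (g' : EuclideanSpace ℝ (Fin n) × ℝ → EuclideanSpace ℂ (Fin n))
    (ud : EuclideanSpace ℝ (Fin n) × ℝ → ℂ) :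
    (robinForm n ε α u g' ud).re = ∫ x, (‖g' x‖ ^ 2 + ‖ud x‖ ^ 2)
      ∂((volume : Measure (EuclideanSpace ℝ (Fin n) × ℝ)).restrict (univ ×ˢ Ioo 0 ε)) := by
  simp [robinForm]

theorem robinForm_im (n : ℕ) (ε : ℝ) (α : EuclideanSpace ℝ (Fin n) → ℝ)
    (u : EuclideanSpace ℝ (Fin n) × ℝ → ℂ)
    (g' : EuclideanSpace ℝ (Fin n) × ℝ → EuclideanSpace ℂ (Fin n))
    (ud : EuclideanSpace ℝ (Fin n) × ℝ → ℂ) :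
    (robinForm n ε α u g' ud).im
      = (∫ x', α x' * ‖u (x', ε)‖ ^ 2) - ∫ x', α x' * ‖u (x', 0)‖ ^ 2 := by
  simp [robinForm]

/-- Sectoriality of the Robin form: `Re h_ε[u] = ‖∇u‖² ≥ 0` and
`|Im h_ε[u]| ≤ 2 ‖α‖_∞ ‖u‖ ‖∇u‖` for `u ∈ W^{1,2}(Ω_ε)`. -/
theorem stmt_8 (n : ℕ) (ε : ℝ) (hε : 0 < ε)
    (α : EuclideanSpace ℝ (Fin n) → ℝ) (Mα : ℝ)
    (hαm : Measurable α) (hMα : ∀ x', |α x'| ≤ Mα)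
    (u : EuclideanSpace ℝ (Fin n) × ℝ → ℂ)
    (g' : EuclideanSpace ℝ (Fin n) × ℝ → EuclideanSpace ℂ (Fin n))
    (ud : EuclideanSpace ℝ (Fin n) × ℝ → ℂ)
    (hderiv : ∀ (x' : EuclideanSpace ℝ (Fin n)) (t : ℝ),
      HasDerivAt (fun s => u (x', s)) (ud (x', t)) t)
    (hu : MemLp u 2 ((volume : Measure (EuclideanSpace ℝ (Fin n) × ℝ)).restrict
      (univ ×ˢ Ioo 0 ε)))
    (hg' : MemLp g' 2 ((volume : Measure (EuclideanSpace ℝ (Fin n) × ℝ)).restrict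
      (univ ×ˢ Ioo 0 ε)))
    (hud : MemLp ud 2 ((volume : Measure (EuclideanSpace ℝ (Fin n) × ℝ)).restrict
      (univ ×ˢ Ioo 0 ε)))
    (htr0 : MemLp (fun x' => u (x', 0)) 2 (volume : Measure (EuclideanSpace ℝ (Fin n))))
    (htrε : MemLp (fun x' => u (x', ε)) 2 (volume : Measure (EuclideanSpace ℝ (Fin n)))) :
    (robinForm n ε α u g' ud).re
      = ∫ x, (‖g' x‖ ^ 2 + ‖ud x‖ ^ 2)
          ∂((volume : Measure (EuclideanSpace ℝ (Fin n) × ℝ)).restrict (univ ×ˢ Ioo 0 ε)) ∧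
    0 ≤ (robinForm n ε α u g' ud).re ∧
    |(robinForm n ε α u g' ud).im|
      ≤ 2 * Mα * Real.sqrt (∫ x, ‖u x‖ ^ 2
            ∂((volume : Measure (EuclideanSpace ℝ (Fin n) × ℝ)).restrict (univ ×ˢ Ioo 0 ε)))
          * Real.sqrt (∫ x, (‖g' x‖ ^ 2 + ‖ud x‖ ^ 2)
            ∂((volume : Measure (EuclideanSpace ℝ (Fin n) × ℝ)).restrict (univ ×ˢ Ioo 0 ε))) := by
  set μ := (volume : Measure (EuclideanSpace ℝ (Fin n) × ℝ)).restrict (univ ×ˢ Ioo 0 ε) with hμ_def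
  have hμ : μ = volume.prod (volume.restrict (Ioo 0 ε)) := by
    rw [hμ_def, Measure.volume_eq_prod, ← Measure.prod_restrict, Measure.restrict_univ]
  have hud_le : ∫ x, ‖ud x‖ ^ 2 ∂μ ≤ ∫ x, (‖g' x‖ ^ 2 + ‖ud x‖ ^ 2) ∂μ :=
    integral_mono (hud.integrable_norm_pow two_ne_zero)
      ((hg'.integrable_norm_pow two_ne_zero).add (hud.integrable_norm_pow two_ne_zero))
      fun x => le_add_of_nonneg_left (by positivity)
  have hMα0 : 0 ≤ Mα := (abs_nonneg _).trans (hMα 0)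
  refine ⟨robinForm_re .., (robinForm_re ..).symm ▸ integral_nonneg fun x => by positivity, ?_⟩
  rw [robinForm_im, ← integral_sub (integrable_mul_norm_sq hαm.aestronglyMeasurable hMα htrε)
    (integrable_mul_norm_sq hαm.aestronglyMeasurable hMα htr0)]
  calc |∫ x', (α x' * ‖u (x', ε)‖ ^ 2 - α x' * ‖u (x', 0)‖ ^ 2)|
      = |∫ x', α x' * (‖u (x', ε)‖ ^ 2 - ‖u (x', 0)‖ ^ 2)| := by simp only [mul_sub]
    _ ≤ 2 * Mα * ∫ x, ‖u x‖ * ‖ud x‖ ∂μ := by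
        rw [hμ]
        refine abs_integral_mul_trace_sub_le hMα hε.le hderiv ?_
        rw [← hμ]
        exact hu.norm.integrable_mul hud.norm
    _ ≤ 2 * Mα * (√(∫ x, ‖u x‖ ^ 2 ∂μ) * √(∫ x, ‖ud x‖ ^ 2 ∂μ)) := by
        gcongr
        exact integral_norm_mul_norm_le_sqrt_mul_sqrt hu hud
    _ ≤ 2 * Mα * √(∫ x, ‖u x‖ ^ 2 ∂μ) * √(∫ x, (‖g' x‖ ^ 2 + ‖ud x‖ ^ 2) ∂μ) := by
        rw [mul_assoc (2 * Mα)]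
        gcongr
end

section
/- Let H be a densely defined closed operator on a complex Hilbert space 𝓗 and let T be the antiunitary conjugation (Tu)(x) = conj(u(x)) (or any antilinear involutive isometry) such that H* = T H T. Then the residual spectrum of H is empty, i.e., for every z ∈ ℂ, if H − z is injective then the range of H − z is dense. -/
open scoped InnerProductSpace ComplexConjugate LinearPMap

/-!
A vector `w` orthogonal to the range of `H - z` satisfies `⟪w, H u⟫ = ⟪z̄ w, u⟫` for every `u` in
the domain, i.e. `w` is an eigenvector of `H†` for the eigenvalue `z̄`. Since `H† = T H T`, the
vector `T w` is then an eigenvector of `H` for `z`, so injectivity of `H - z` forces `T w = 0`,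
hence `w = 0`. Thus the range of `H - z` has trivial orthogonal complement and is dense.
-/

namespace LinearPMap

section RCLike

variable {𝕜 E : Type*} [RCLike 𝕜] [NormedAddCommGroup E] [InnerProductSpace 𝕜 E]
  [CompleteSpace E]

theorem adjoint_apply_eq_conj_smul_of_mem_orthogonal_range {H : E →ₗ.[𝕜] E}
    (hH : Dense (H.domain : Set E)) {z : 𝕜} {w : E}
    (hw : w ∈ (LinearMap.range (H.toFun - z • H.domain.subtype))ᗮ) :
    ∃ hw' : w ∈ H†.domain, H† ⟨w, hw'⟩ = conj z • w := by
  have key : ∀ u : H.domain, ⟪conj z • w, (u : E)⟫_𝕜 = ⟪w, H u⟫_𝕜 := by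
    intro u
    have horth : ⟪w, H u - z • (u : E)⟫_𝕜 = 0 :=
      (Submodule.mem_orthogonal' _ w).mp hw _ ⟨u, rfl⟩
    rw [inner_sub_right, inner_smul_right, sub_eq_zero] at horth
    rw [inner_smul_left, RCLike.conj_conj, horth]
  exact ⟨mem_adjoint_domain_of_exists w ⟨_, key⟩, adjoint_apply_eq hH _ key⟩

end RCLike

theorem exists_apply_eq_conj_smul_of_adjoint_apply_eq_smul {E : Type*}
    [NormedAddCommGroup E] [InnerProductSpace ℂ E] [CompleteSpace E] {H : E →ₗ.[ℂ] E}
    {T : E → E} (hT_smul : ∀ (c : ℂ) (x : E), T (c • x) = conj c • T x)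
    (hT_invol : ∀ x, T (T x) = x)
    (hdom : (H†.domain : Set E) = T '' (H.domain : Set E))
    (hTHT : ∀ u : H.domain, ∃ h : T u ∈ H†.domain, H† ⟨T u, h⟩ = T (H u))
    {c : ℂ} (w : H†.domain) (hw : H† w = c • (w : E)) :
    ∃ v : H.domain, (v : E) = T w ∧ H v = conj c • (v : E) := by
  obtain ⟨v, hv, hTv⟩ : (w : E) ∈ T '' (H.domain : Set E) := hdom ▸ w.2
  obtain ⟨hmem, hTHv⟩ := hTHT ⟨v, hv⟩
  have hTHv' : T (H ⟨v, hv⟩) = c • T v := by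
    rw [← hTHv, show (⟨T v, hmem⟩ : H†.domain) = w from Subtype.ext hTv, hw, hTv]
  refine ⟨⟨v, hv⟩, by rw [← hTv, hT_invol], ?_⟩
  rw [← hT_invol (H ⟨v, hv⟩), hTHv', hT_smul, hT_invol]

end LinearPMap

theorem stmt_10_general {E : Type*} [NormedAddCommGroup E] [InnerProductSpace ℂ E]
    [CompleteSpace E]
    (H : E →ₗ.[ℂ] E) (hdense : Dense (H.domain : Set E))
    (T : E → E)
    (hT_smul : ∀ (c : ℂ) (x : E), T (c • x) = (starRingEnd ℂ) c • T x)
    (hT_invol : ∀ x, T (T x) = x)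
    (hdom : (H.adjoint.domain : Set E) = T '' (H.domain : Set E))
    (hTHT : ∀ u : H.domain, ∃ h : T u ∈ H.adjoint.domain,
      H.adjoint ⟨T u, h⟩ = T (H u))
    (z : ℂ)
    (hinj : ∀ u v : H.domain, H u - z • (u : E) = H v - z • (v : E) → (u : E) = v) :
    Dense {y : E | ∃ u : H.domain, y = H u - z • (u : E)} := by
  set R := LinearMap.range (H.toFun - z • H.domain.subtype)
  have hR : {y : E | ∃ u : H.domain, y = H u - z • (u : E)} = R := by
    ext y
    exact ⟨fun ⟨u, hu⟩ => ⟨u, hu.symm⟩, fun ⟨u, hu⟩ => ⟨u, hu.symm⟩⟩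
  have hT_zero : T 0 = 0 := by simpa using hT_smul 0 0
  have hR_orth : Rᗮ = ⊥ := by
    refine (Submodule.eq_bot_iff _).mpr fun w hw => ?_
    obtain ⟨hw', hHw⟩ := H.adjoint_apply_eq_conj_smul_of_mem_orthogonal_range hdense hw
    obtain ⟨v, hvw, hHv⟩ :=
      H.exists_apply_eq_conj_smul_of_adjoint_apply_eq_smul hT_smul hT_invol hdom hTHT _ hHw
    have hv : (v : E) = (0 : H.domain) := hinj v 0 (by simp [hHv])
    rw [← hT_invol w, ← hvw, hv, ZeroMemClass.coe_zero, hT_zero]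
  rw [hR, Submodule.dense_iff_topologicalClosure_eq_top, Submodule.topologicalClosure_eq_top_iff]
  exact hR_orth

/-- A densely defined closed operator `H` on a complex Hilbert space satisfying
`H* = T H T` with `T` an antilinear isometric involution (a conjugation) has empty
residual spectrum: whenever `H - z` is injective, its range is dense. -/
theorem stmt_10 {E : Type*} [NormedAddCommGroup E] [InnerProductSpace ℂ E]
    [CompleteSpace E]
    (H : E →ₗ.[ℂ] E) (hdense : Dense (H.domain : Set E)) (hclosed : H.IsClosed)
    (T : E → E)
    (hT_add : ∀ x y, T (x + y) = T x + T y)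
    (hT_smul : ∀ (c : ℂ) (x : E), T (c • x) = (starRingEnd ℂ) c • T x)
    (hT_invol : ∀ x, T (T x) = x)
    (hT_norm : ∀ x, ‖T x‖ = ‖x‖)
    (hdom : (H.adjoint.domain : Set E) = T '' (H.domain : Set E))
    (hTHT : ∀ u : H.domain, ∃ h : T u ∈ H.adjoint.domain,
      H.adjoint ⟨T u, h⟩ = T (H u))
    (z : ℂ)
    (hinj : ∀ u v : H.domain, H u - z • (u : E) = H v - z • (v : E) → (u : E) = v) :
    Dense {y : E | ∃ u : H.domain, y = H u - z • (u : E)} :=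
  stmt_10_general H hdense T hT_smul hT_invol hdom hTHT z hinj
end
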